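/- Let I ∈ ℍ satisfy re(I) = 0 and ‖I‖ = 1, let ℂ_I = ℝ·1 + ℝ·I, and let π_I : ℍ → ℂ_I be the orthogonal projection with respect to the Euclidean inner product ⟨a,b⟩ = re(a · star b). For f = ∑ₖ aₖXᵏ ∈ ℍ[X] write f_I = ∑ₖ π_I(aₖ)Xᵏ and f_I^⊥ = ∑ₖ (aₖ − π_I(aₖ))Xᵏ. Then for every λ ∈ ℂ_I: f_I(λ) ∈ ℂ_I and f_I^⊥(λ) is orthogonal to ℂ_I; consequently f(λ) = 0 if and only if f_I(λ) = 0 and f_I^⊥(λ) = 0. -/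

import Mathlib

open Polynomial

noncomputable section

/-- The real subalgebra `ℂ_I = ℝ·1 + ℝ·I` of `ℍ`, as an `ℝ`-submodule. -/
def CI (I : Quaternion ℝ) : Submodule ℝ (Quaternion ℝ) :=
  Submodule.span ℝ {1, I}

/-- The orthogonal projection `π_I : ℍ → ℂ_I` (with respect to the Euclidean
inner product `⟨a,b⟩ = re (a · star b)`), viewed as a map `ℍ → ℍ`. -/
def piI (I : Quaternion ℝ) (a : Quaternion ℝ) : Quaternion ℝ :=
  ((CI I).orthogonalProjectionOnto a : Quaternion ℝ)

/-- `f_I = ∑ₖ π_I(aₖ) Xᵏ`, the projection of the coefficients of `f` onto `ℂ_I`. -/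
def polyProj (I : Quaternion ℝ) (f : Polynomial (Quaternion ℝ)) :
    Polynomial (Quaternion ℝ) :=
  f.sum fun k a => C (piI I a) * X ^ k

/-- `f_I^⊥ = ∑ₖ (aₖ − π_I(aₖ)) Xᵏ`, the orthogonal component of `f`. -/
def polyProjPerp (I : Quaternion ℝ) (f : Polynomial (Quaternion ℝ)) :
    Polynomial (Quaternion ℝ) :=
  f.sum fun k a => C (a - piI I a) * X ^ k

/-! Every quaternion satisfies `I * I = 2 re(I) I - ‖I‖²`, so `ℂ_I = span {1, I}` is closed under
multiplication and, as `star x = 2 re(x) - x`, under conjugation. Since `⟨x y, c⟩ = ⟨x, c ȳ⟩`,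
right multiplication by an element of `ℂ_I` then preserves `ℂ_Iᗮ`. For `λ ∈ ℂ_I` every term
`π_I(aₖ) λᵏ` of `f_I(λ)` lies in `ℂ_I` and every term `(aₖ - π_I(aₖ)) λᵏ` of `f_I^⊥(λ)` in `ℂ_Iᗮ`;
as `f(λ) = f_I(λ) + f_I^⊥(λ)`, it vanishes iff both orthogonal summands do. -/

namespace Quaternion

theorem mul_self_eq_two_re_smul_sub_normSq (a : Quaternion ℝ) :
    a * a = (2 * a.re) • a - ((normSq a : ℝ) : Quaternion ℝ) := by
  have h := self_mul_star a
  rw [star_eq_two_re_sub, mul_sub, mul_coe_eq_smul] at h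
  rw [← h, sub_sub_cancel]

theorem inner_mul_left_eq_inner_mul_star (x y c : Quaternion ℝ) :
    inner ℝ (x * y) c = inner ℝ x (c * star y) := by
  simp only [inner_def, star_mul, star_star, mul_assoc]

end Quaternion

theorem Submodule.mul_mem_span_one_pair {R A : Type*} [CommSemiring R] [Semiring A]
    [Algebra R A] {I x y : A} (hI : I * I ∈ span R {1, I}) (hx : x ∈ span R {1, I})
    (hy : y ∈ span R {1, I}) : x * y ∈ span R {1, I} := by
  have hI_mem : I ∈ span R {1, I} := subset_span (by simp)
  have hI_mul : ∀ z ∈ span R {1, I}, I * z ∈ span R {1, I} := by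
    intro z hz
    obtain ⟨c, d, rfl⟩ := mem_span_pair.1 hz
    rw [mul_add, mul_smul_comm, mul_smul_comm, mul_one]
    exact add_mem (smul_mem _ c hI_mem) (smul_mem _ d hI)
  obtain ⟨a, b, rfl⟩ := mem_span_pair.1 hx
  rw [add_mul, smul_mul_assoc, smul_mul_assoc, one_mul]
  exact add_mem (smul_mem _ a hy) (smul_mem _ b (hI_mul y hy))

theorem Submodule.add_eq_zero_iff_of_disjoint {R M : Type*} [Ring R] [AddCommGroup M]
    [Module R M] {p q : Submodule R M} (h : Disjoint p q) {x y : M} (hx : x ∈ p) (hy : y ∈ q) :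
    x + y = 0 ↔ x = 0 ∧ y = 0 := by
  refine ⟨fun hxy => ?_, fun ⟨hx0, hy0⟩ => by rw [hx0, hy0, add_zero]⟩
  have hx0 : x = 0 :=
    disjoint_def'.1 h x hx (-y) (neg_mem hy) (eq_neg_of_add_eq_zero_left hxy)
  exact ⟨hx0, by rwa [hx0, zero_add] at hxy⟩

theorem Polynomial.eval_sum_C_mul_X_pow {R : Type*} [Semiring R] (f : R[X]) (g : R → R)
    (x : R) : eval x (f.sum fun k a => C (g a) * X ^ k) = f.sum fun k a => g a * x ^ k := by
  simp [eval_sum]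

section CI

variable (I : Quaternion ℝ) {x y : Quaternion ℝ}

theorem self_mem_CI : I ∈ CI I :=
  Submodule.subset_span (by simp)

theorem coe_mem_CI (r : ℝ) : (r : Quaternion ℝ) ∈ CI I := by
  rw [← mul_one r, ← Quaternion.smul_coe, Quaternion.coe_one]
  exact Submodule.smul_mem _ r (Submodule.subset_span (by simp))

theorem mul_self_mem_CI : I * I ∈ CI I := by
  rw [Quaternion.mul_self_eq_two_re_smul_sub_normSq]
  exact sub_mem (Submodule.smul_mem _ _ (self_mem_CI I)) (coe_mem_CI I _)

variable {I}

theorem mul_mem_CI (hx : x ∈ CI I) (hy : y ∈ CI I) : x * y ∈ CI I :=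
  Submodule.mul_mem_span_one_pair (mul_self_mem_CI I) hx hy

theorem pow_mem_CI (hx : x ∈ CI I) (k : ℕ) : x ^ k ∈ CI I := by
  induction k with
  | zero => simpa using coe_mem_CI I 1
  | succ k ih => rw [pow_succ]; exact mul_mem_CI ih hx

theorem star_mem_CI (hx : x ∈ CI I) : star x ∈ CI I := by
  rw [Quaternion.star_eq_two_re_sub]
  exact sub_mem (coe_mem_CI I _) hx

theorem mul_mem_orthogonal_CI (hx : x ∈ (CI I)ᗮ) (hy : y ∈ CI I) : x * y ∈ (CI I)ᗮ := by
  refine (Submodule.mem_orthogonal _ _).2 fun c hc => ?_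
  rw [real_inner_comm, Quaternion.inner_mul_left_eq_inner_mul_star]
  exact Submodule.inner_left_of_mem_orthogonal (mul_mem_CI hc (star_mem_CI hy)) hx

variable (I)

theorem piI_mem_CI (a : Quaternion ℝ) : piI I a ∈ CI I :=
  SetLike.coe_mem _

theorem sub_piI_mem_orthogonal_CI (a : Quaternion ℝ) : a - piI I a ∈ (CI I)ᗮ :=
  Submodule.sub_starProjection_mem_orthogonal a

theorem polyProj_add_polyProjPerp (f : Polynomial (Quaternion ℝ)) :
    polyProj I f + polyProjPerp I f = f := by
  rw [polyProj, polyProjPerp, ← sum_add]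
  simp_rw [← add_mul, ← C_add, add_sub_cancel]
  exact sum_C_mul_X_pow_eq f

variable {I} (f : Polynomial (Quaternion ℝ)) {lam : Quaternion ℝ}

theorem eval_polyProj_mem_CI (hlam : lam ∈ CI I) : eval lam (polyProj I f) ∈ CI I := by
  rw [polyProj, eval_sum_C_mul_X_pow, sum_def]
  exact Submodule.sum_mem _ fun k _ => mul_mem_CI (piI_mem_CI I _) (pow_mem_CI hlam k)

theorem eval_polyProjPerp_mem_orthogonal_CI (hlam : lam ∈ CI I) :
    eval lam (polyProjPerp I f) ∈ (CI I)ᗮ := by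
  rw [polyProjPerp, eval_sum_C_mul_X_pow, sum_def]
  exact Submodule.sum_mem _ fun k _ =>
    mul_mem_orthogonal_CI (sub_piI_mem_orthogonal_CI I _) (pow_mem_CI hlam k)

end CI

theorem eval_proj_decomposition
    (I : Quaternion ℝ)
    (f : Polynomial (Quaternion ℝ)) (lam : Quaternion ℝ) (hlam : lam ∈ CI I) :
    Polynomial.eval lam (polyProj I f) ∈ CI I ∧
    Polynomial.eval lam (polyProjPerp I f) ∈ (CI I)ᗮ ∧
    (Polynomial.eval lam f = 0 ↔
      Polynomial.eval lam (polyProj I f) = 0 ∧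
        Polynomial.eval lam (polyProjPerp I f) = 0) := by
  have hproj := eval_polyProj_mem_CI f hlam
  have hperp := eval_polyProjPerp_mem_orthogonal_CI f hlam
  have hsum : eval lam f = eval lam (polyProj I f) + eval lam (polyProjPerp I f) := by
    rw [← eval_add, polyProj_add_polyProjPerp]
  rw [hsum]
  exact ⟨hproj, hperp, Submodule.add_eq_zero_iff_of_disjoint (CI I).orthogonal_disjoint hproj hperp⟩
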